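/- Let Z* ∈ R^{n×r} have full column rank r with σ_r = σ_min(Z*)² > 0 the smallest eigenvalue of X* = Z* (Z*)^T. Then for every Z ∈ R^{n×r}, ‖Z Z^T − Z* (Z*)^T‖_F² ≥ (2√2 − 2) σ_r · d(Z, Z*)². -/

import Mathlib

open Matrix MeasureTheory ProbabilityTheory Real
open scoped BigOperators ENNReal

noncomputable section

/-- Frobenius norm of a real matrix. -/
def frobNorm {a b : ℕ} (M : Matrix (Fin a) (Fin b) ℝ) : ℝ :=
  Real.sqrt (∑ i, ∑ j, (M i j) ^ 2)

/-- Frobenius (trace) inner product `⟨M, N⟩ = trace (Mᵀ N)`. -/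
def frobInner {a b : ℕ} (M N : Matrix (Fin a) (Fin b) ℝ) : ℝ :=
  ∑ i, ∑ j, M i j * N i j

/-- Operator (spectral) norm of a real square matrix. -/
def opNorm {n : ℕ} (M : Matrix (Fin n) (Fin n) ℝ) : ℝ :=
  ‖LinearMap.toContinuousLinearMap (Matrix.toEuclideanLin M)‖

/-- An `r × r` real matrix is orthonormal if `U Uᵀ = Uᵀ U = I`. -/
def IsOrthoMat {r : ℕ} (U : Matrix (Fin r) (Fin r) ℝ) : Prop :=
  U * Uᵀ = 1 ∧ Uᵀ * U = 1

/-- The solution set `S̃ = {Z* U : U orthonormal}`. -/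
def solSet {n r : ℕ} (Zstar : Matrix (Fin n) (Fin r) ℝ) : Set (Matrix (Fin n) (Fin r) ℝ) :=
  {Zt | ∃ U, IsOrthoMat U ∧ Zt = Zstar * U}

/-- The distance `d(Z, Z*) = min_{Z̃ ∈ S̃} ‖Z − Z̃‖_F`. -/
def dSol {n r : ℕ} (Z Zstar : Matrix (Fin n) (Fin r) ℝ) : ℝ :=
  ⨅ Zt : solSet Zstar, frobNorm (Z - (Zt : Matrix (Fin n) (Fin r) ℝ))

/-- `Zbar` is a matrix in the solution set closest to `Z`. -/
def IsClosest {n r : ℕ} (Zstar Z Zbar : Matrix (Fin n) (Fin r) ℝ) : Prop :=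
  Zbar ∈ solSet Zstar ∧ ∀ Zt ∈ solSet Zstar, frobNorm (Z - Zbar) ≤ frobNorm (Z - Zt)

/-- The gradient `∇f(Z) = (1/m) Σ_i (trace(Zᵀ A_i Z) − b_i) A_i Z`. -/
def gradf {n r m : ℕ} (A : Fin m → Matrix (Fin n) (Fin n) ℝ) (b : Fin m → ℝ)
    (Z : Matrix (Fin n) (Fin r) ℝ) : Matrix (Fin n) (Fin r) ℝ :=
  (1 / (m : ℝ)) • ∑ i, (Matrix.trace (Zᵀ * A i * Z) - b i) • (A i * Z)

/-- Assumption A1 with parameter `δ`. -/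
def AssumpA1 {n m : ℕ} (A : Fin m → Matrix (Fin n) (Fin n) ℝ) (σ1 : ℝ) (r : ℕ)
    (δ : ℝ) : Prop :=
  ∀ u : Fin n → ℝ, Real.sqrt (∑ i, u i ^ 2) ≤ Real.sqrt σ1 →
    opNorm ((1 / (m : ℝ)) • ∑ i, (u ⬝ᵥ (A i).mulVec u) • A i - (2 : ℝ) • vecMulVec u u)
      ≤ δ / r

/-- Assumption A2 with parameter `δ`. -/
def AssumpA2 {n r m : ℕ} (A : Fin m → Matrix (Fin n) (Fin n) ℝ)
    (Zstar : Matrix (Fin n) (Fin r) ℝ) (δ : ℝ) : Prop :=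
  ∀ Zt ∈ solSet Zstar, ∀ s k : Fin r,
    opNorm ((1 / (m : ℝ)) •
        ∑ i, (2 : ℝ) • (A i * vecMulVec (fun j => Zt j s) (fun j => Zt j k) * A i)
      - ((2 * ((fun j => Zt j s) ⬝ᵥ fun j => Zt j k)) • (1 : Matrix (Fin n) (Fin n) ℝ)
          + (2 : ℝ) • vecMulVec (fun j => Zt j k) (fun j => Zt j s)))
      ≤ δ / r


/-!
Take `Zb = Z* U` with `U` an orthogonal matrix maximising `trace (Zᵀ Z* U)` (it exists by
compactness). Testing the maximum against Householder reflections and products of two of them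
shows that `P = Zᵀ Zb` is symmetric positive semidefinite. With `H = Z - Zb`, `Δ = Hᵀ H`,
`T = Hᵀ Zb` and `B = Zbᵀ Zb`, the symmetry of `T = P - B` gives
`‖Z Zᵀ - Zb Zbᵀ‖² = tr Δ² + 2 tr T² + 2 tr ΔB + 4 tr ΔT`.
Cauchy–Schwarz and AM–GM give `tr Δ² + 2 tr T² ≥ -2√2 tr ΔT`, positivity of `P = B + T` gives
`tr ΔB + tr ΔT ≥ 0`, so the right side is at least `(2√2 - 2) tr ΔB`; finally `B ⪰ σ_r I`
gives `tr ΔB ≥ σ_r ‖H‖² ≥ σ_r d(Z, Z*)²`.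
-/

section Trace

variable {m n : Type*} [Fintype m] [Fintype n]

theorem sq_trace_transpose_mul_le {R : Type*} [CommRing R] [LinearOrder R]
    [IsStrictOrderedRing R] (X Y : Matrix m n R) :
    trace (Xᵀ * Y) ^ 2 ≤ trace (Xᵀ * X) * trace (Yᵀ * Y) := by
  simp only [← vec_dotProduct_vec, dotProduct]
  simpa [sq] using Finset.sum_mul_sq_le_sq_mul_sq Finset.univ X.vec Y.vec

theorem trace_transpose_mul_self_nonneg (X : Matrix m n ℝ) : 0 ≤ trace (Xᵀ * X) := by
  rw [← conjTranspose_eq_transpose_of_trivial]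
  exact (posSemidef_conjTranspose_mul_self X).trace_nonneg

theorem trace_transpose_mul_self_mul_nonneg {Q : Matrix n n ℝ} (hQ : Q.PosSemidef)
    (H : Matrix m n ℝ) : 0 ≤ trace (Hᵀ * H * Q) := by
  rw [Matrix.mul_assoc, trace_mul_comm, ← conjTranspose_eq_transpose_of_trivial]
  exact (hQ.mul_mul_conjTranspose_same H).trace_nonneg

theorem trace_mul_transpose_sub_sq {R : Type*} [CommRing R] (Z Zb : Matrix m n R) :
    trace ((Z * Zᵀ - Zb * Zbᵀ)ᵀ * (Z * Zᵀ - Zb * Zbᵀ)) =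
      trace (Zᵀ * Z * (Zᵀ * Z)) - 2 * trace (Zᵀ * Zb * (Zᵀ * Zb)ᵀ) +
        trace (Zbᵀ * Zb * (Zbᵀ * Zb)) := by
  simp only [transpose_sub, transpose_mul, transpose_transpose, sub_mul, mul_sub, trace_sub]
  rw [trace_mul_comm (Zb * Zbᵀ) (Z * Zᵀ)]
  simp only [Matrix.mul_assoc]
  rw [trace_mul_comm Z, trace_mul_comm Z, trace_mul_comm Zb]
  simp only [Matrix.mul_assoc]
  ring

theorem trace_add_mul_transpose_sub_sq {R : Type*} [CommRing R] {Zb H : Matrix m n R}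
    (hT : (Hᵀ * Zb)ᵀ = Hᵀ * Zb) :
    trace (((Zb + H) * (Zb + H)ᵀ - Zb * Zbᵀ)ᵀ * ((Zb + H) * (Zb + H)ᵀ - Zb * Zbᵀ)) =
      trace (Hᵀ * H * (Hᵀ * H)) + 2 * trace (Hᵀ * Zb * (Hᵀ * Zb)) +
        2 * trace (Hᵀ * H * (Zbᵀ * Zb)) + 4 * trace (Hᵀ * H * (Hᵀ * Zb)) := by
  have hB : (Zbᵀ * Zb)ᵀ = Zbᵀ * Zb := by rw [transpose_mul, transpose_transpose]
  have hA : (Zb + H)ᵀ * (Zb + H) = Zbᵀ * Zb + Hᵀ * Zb + Hᵀ * Zb + Hᵀ * H := by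
    rw [transpose_add, Matrix.add_mul, Matrix.mul_add, Matrix.mul_add, ← hT, transpose_mul,
      transpose_transpose]
    abel
  have hP : (Zb + H)ᵀ * Zb = Zbᵀ * Zb + Hᵀ * Zb := by rw [transpose_add, Matrix.add_mul]
  rw [trace_mul_transpose_sub_sq, hA, hP, transpose_add, hB, hT]
  simp only [add_mul, mul_add, trace_add]
  rw [trace_mul_comm (Zbᵀ * Zb) (Hᵀ * Zb), trace_mul_comm (Zbᵀ * Zb) (Hᵀ * H),
    trace_mul_comm (Hᵀ * Zb) (Hᵀ * H)]
  ring

end Trace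

section Procrustes

variable {n : Type*} [Fintype n] [DecidableEq n]

open scoped Matrix.Norms.Elementwise in
theorem isCompact_orthogonalGroup : IsCompact (orthogonalGroup n ℝ : Set (Matrix n n ℝ)) := by
  have : ProperSpace (Matrix n n ℝ) := FiniteDimensional.proper_real _
  refine Metric.isCompact_of_isClosed_isBounded ?_ ?_
  · have : (orthogonalGroup n ℝ : Set (Matrix n n ℝ)) = {U | U * Uᵀ = 1} := by
      ext U
      exact mem_orthogonalGroup_iff n ℝ
    rw [this]
    exact isClosed_eq (by fun_prop) continuous_const
  · refine (Metric.isBounded_iff_subset_closedBall 0).2 ⟨1, fun U hU => ?_⟩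
    rw [mem_closedBall_zero_iff]
    exact entrywise_sup_norm_bound_of_unitary hU

/-- The reflection in the hyperplane `v⊥`; for `v = 0` the junk value `2 / 0 = 0` makes it `1`. -/
def householder (v : n → ℝ) : Matrix n n ℝ := 1 - (2 / (v ⬝ᵥ v)) • vecMulVec v v

theorem transpose_householder (v : n → ℝ) : (householder v)ᵀ = householder v := by
  simp [householder, transpose_vecMulVec]

theorem householder_mem_orthogonalGroup (v : n → ℝ) : householder v ∈ orthogonalGroup n ℝ := by
  rw [mem_orthogonalGroup_iff, transpose_householder, householder]
  have hc : (2 / (v ⬝ᵥ v)) * (2 / (v ⬝ᵥ v)) * (v ⬝ᵥ v) = 2 * (2 / (v ⬝ᵥ v)) := by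
    rcases eq_or_ne (v ⬝ᵥ v) 0 with h | h
    · simp [h]
    · field_simp
  simp only [sub_mul, mul_sub, one_mul, mul_one, smul_mul_smul, vecMulVec_mul_vecMulVec,
    vecMulVec_smul, smul_smul, hc]
  module

theorem householder_mulVec (u v : n → ℝ) :
    householder u *ᵥ v = v - (2 / (u ⬝ᵥ u) * (u ⬝ᵥ v)) • u := by
  simp [householder, sub_mulVec, smul_mulVec, vecMulVec_mulVec, smul_smul]

theorem trace_mul_householder (P : Matrix n n ℝ) (v : n → ℝ) :
    trace (P * householder v) = trace P - 2 / (v ⬝ᵥ v) * (v ⬝ᵥ P *ᵥ v) := by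
  simp [householder, mul_sub, mul_vecMulVec, dotProduct_comm]

variable {P : Matrix n n ℝ}

theorem dotProduct_mulVec_nonneg_of_forall_trace_mul_le
    (h : ∀ W ∈ orthogonalGroup n ℝ, trace (P * W) ≤ trace P) (v : n → ℝ) :
    0 ≤ v ⬝ᵥ P *ᵥ v := by
  have := h _ (householder_mem_orthogonalGroup v)
  rw [trace_mul_householder] at this
  rcases eq_or_ne v 0 with rfl | hv
  · simp
  have hvv : 0 < v ⬝ᵥ v := by simpa using dotProduct_self_star_pos_iff.2 hv
  have h2 : 0 < 2 / (v ⬝ᵥ v) := by positivity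
  exact (mul_nonneg_iff_of_pos_left h2).1 (by linarith)

theorem transpose_eq_of_forall_trace_mul_le
    (h : ∀ W ∈ orthogonalGroup n ℝ, trace (P * W) ≤ trace P) : Pᵀ = P := by
  ext a b
  rcases eq_or_ne b a with rfl | hab
  · rfl
  have key : ∀ x : ℝ, 0 ≤ P a a + P b b + x * (P a b - P b a) := by
    intro x
    set u : n → ℝ := Pi.single a 1
    set v : n → ℝ := x • Pi.single a 1 + Pi.single b 1
    have := h _ (mul_mem (householder_mem_orthogonalGroup u) (householder_mem_orthogonalGroup v))
    rw [← Matrix.mul_assoc, trace_mul_householder, trace_mul_householder, ← mulVec_mulVec,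
      householder_mulVec] at this
    simp [u, v, dotProduct_add, add_dotProduct, mulVec_sub, mulVec_add, mulVec_smul, hab,
      hab.symm] at this
    field_simp at this
    linarith
  by_contra hne
  have hd : P a b - P b a ≠ 0 := sub_ne_zero.2 (Ne.symm hne)
  have := key (-(P a a + P b b + 1) / (P a b - P b a))
  rw [div_mul_cancel₀ _ hd] at this
  linarith

theorem posSemidef_of_forall_trace_mul_le
    (h : ∀ W ∈ orthogonalGroup n ℝ, trace (P * W) ≤ trace P) : P.PosSemidef :=
  .of_dotProduct_mulVec_nonneg
    (by rw [IsHermitian, conjTranspose_eq_transpose_of_trivial,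
      transpose_eq_of_forall_trace_mul_le h])
    fun v => by simpa using dotProduct_mulVec_nonneg_of_forall_trace_mul_le h v

theorem exists_mem_orthogonalGroup_posSemidef_mul (M : Matrix n n ℝ) :
    ∃ U ∈ orthogonalGroup n ℝ, (M * U).PosSemidef := by
  obtain ⟨U, hU, hmax⟩ := isCompact_orthogonalGroup.exists_isMaxOn ⟨1, one_mem _⟩
    (by fun_prop : Continuous fun U : Matrix n n ℝ => trace (M * U)).continuousOn
  refine ⟨U, hU, posSemidef_of_forall_trace_mul_le fun W hW => ?_⟩
  rw [Matrix.mul_assoc]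
  exact hmax (mul_mem hU hW)

end Procrustes

section Spectrum

variable {m n : Type*} [Fintype m] [Fintype n] [DecidableEq n]

theorem posSemidef_mul_diagonal_mul_transpose_sub_smul_one {N : Matrix n n ℝ} (hN : N * Nᵀ = 1)
    {d : n → ℝ} {σ : ℝ} (hd : ∀ i, σ ≤ d i) : (N * diagonal d * Nᵀ - σ • 1).PosSemidef := by
  have : N * diagonal d * Nᵀ - σ • 1 = N * diagonal (fun i => d i - σ) * Nᵀ := by
    rw [← diagonal_sub, ← smul_one_eq_diagonal, Matrix.mul_sub, Matrix.sub_mul, Matrix.mul_smul,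
      Matrix.mul_one, Matrix.smul_mul, hN]
  rw [this, ← conjTranspose_eq_transpose_of_trivial]
  exact (PosSemidef.diagonal fun i => sub_nonneg.2 (hd i)).mul_mul_conjTranspose_same N

theorem Matrix.PosSemidef.transpose_mul_self_mul_sub_smul_one {X : Matrix m n ℝ} {σ : ℝ}
    (hX : (Xᵀ * X - σ • 1).PosSemidef) {U : Matrix n n ℝ} (hU : U ∈ orthogonalGroup n ℝ) :
    ((X * U)ᵀ * (X * U) - σ • 1).PosSemidef := by
  have : (X * U)ᵀ * (X * U) - σ • 1 = Uᵀ * (Xᵀ * X - σ • 1) * U := by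
    rw [Matrix.mul_sub, Matrix.sub_mul, Matrix.mul_smul, Matrix.mul_one, Matrix.smul_mul,
      (mem_orthogonalGroup_iff' n ℝ).1 hU, transpose_mul, Matrix.mul_assoc, Matrix.mul_assoc,
      Matrix.mul_assoc]
  rw [this, ← conjTranspose_eq_transpose_of_trivial]
  exact hX.conjTranspose_mul_mul_same U

end Spectrum

section Distance

variable {n r : ℕ}

theorem frobNorm_sq {a b : ℕ} (M : Matrix (Fin a) (Fin b) ℝ) :
    frobNorm M ^ 2 = trace (Mᵀ * M) := by
  rw [frobNorm, Real.sq_sqrt (by positivity), ← vec_dotProduct_vec, dotProduct,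
    Fintype.sum_prod_type, Finset.sum_comm]
  simp [vec, sq]

theorem isOrthoMat_of_mem_orthogonalGroup {U : Matrix (Fin r) (Fin r) ℝ}
    (hU : U ∈ orthogonalGroup (Fin r) ℝ) : IsOrthoMat U :=
  ⟨(mem_orthogonalGroup_iff _ ℝ).1 hU, (mem_orthogonalGroup_iff' _ ℝ).1 hU⟩

theorem frobNorm_nonneg {a b : ℕ} (M : Matrix (Fin a) (Fin b) ℝ) : 0 ≤ frobNorm M :=
  Real.sqrt_nonneg _

theorem dSol_nonneg (Z Zstar : Matrix (Fin n) (Fin r) ℝ) : 0 ≤ dSol Z Zstar :=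
  Real.iInf_nonneg fun _ => frobNorm_nonneg _

theorem dSol_le_frobNorm_sub {Z Zstar Zt : Matrix (Fin n) (Fin r) ℝ} (h : Zt ∈ solSet Zstar) :
    dSol Z Zstar ≤ frobNorm (Z - Zt) :=
  ciInf_le ⟨0, Set.forall_mem_range.2 fun _ => frobNorm_nonneg _⟩ (⟨Zt, h⟩ : solSet Zstar)

theorem mul_frobNorm_sub_sq_le {Z Zb : Matrix (Fin n) (Fin r) ℝ} {σ : ℝ}
    (hP : (Zᵀ * Zb).PosSemidef) (hB : (Zbᵀ * Zb - σ • 1).PosSemidef) :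
    (2 * √2 - 2) * σ * frobNorm (Z - Zb) ^ 2 ≤ frobNorm (Z * Zᵀ - Zb * Zbᵀ) ^ 2 := by
  obtain ⟨H, rfl⟩ : ∃ H, Z = Zb + H := ⟨Z - Zb, by abel⟩
  have hP' : (Zb + H)ᵀ * Zb = Zbᵀ * Zb + Hᵀ * Zb := by rw [transpose_add, Matrix.add_mul]
  have hT : (Hᵀ * Zb)ᵀ = Hᵀ * Zb := by
    have := hP.isHermitian.eq
    rw [conjTranspose_eq_transpose_of_trivial, hP', transpose_add, transpose_mul Zbᵀ,
      transpose_transpose] at this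
    exact add_left_cancel this
  rw [add_sub_cancel_left, frobNorm_sq, frobNorm_sq, trace_add_mul_transpose_sub_sq hT]
  set Δ := Hᵀ * H
  set T := Hᵀ * Zb
  set B := Zbᵀ * Zb
  have hΔ : Δᵀ = Δ := by rw [transpose_mul, transpose_transpose]
  have hΔΔ : 0 ≤ trace (Δ * Δ) := by simpa only [hΔ] using trace_transpose_mul_self_nonneg Δ
  have hTT : 0 ≤ trace (T * T) := by simpa only [hT] using trace_transpose_mul_self_nonneg T
  have hΔP : 0 ≤ trace (Δ * B) + trace (Δ * T) := by
    have := trace_transpose_mul_self_mul_nonneg hP H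
    rwa [hP', Matrix.mul_add, trace_add] at this
  have hΔB : σ * trace Δ ≤ trace (Δ * B) := by
    have := trace_transpose_mul_self_mul_nonneg hB H
    rw [Matrix.mul_sub, trace_sub, Matrix.mul_smul, Matrix.mul_one, trace_smul, smul_eq_mul] at this
    linarith
  have hCS : trace (Δ * T) ^ 2 ≤ trace (Δ * Δ) * trace (T * T) := by
    simpa only [hΔ, hT] using sq_trace_transpose_mul_le Δ T
  have hAMGM : 2 * -(√2 * trace (Δ * T)) ≤ trace (Δ * Δ) + 2 * trace (T * T) :=
    two_mul_le_add_of_sq_le_mul hΔΔ (by positivity) (by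
      rw [neg_sq, mul_pow, Real.sq_sqrt zero_le_two]; nlinarith)
  have hsqrt : √2 ≤ 2 := by
    nlinarith [Real.sq_sqrt (zero_le_two : (0 : ℝ) ≤ 2), Real.sqrt_nonneg 2]
  have hσB : (2 * √2 - 2) * σ * trace Δ ≤ (2 * √2 - 2) * trace (Δ * B) := by
    rw [mul_assoc]
    exact mul_le_mul_of_nonneg_left hΔB (by linarith [Real.one_lt_sqrt_two])
  linarith [mul_nonneg (by linarith : (0 : ℝ) ≤ 4 - 2 * √2) hΔP]

end Distance

theorem frobenius_lower_bound_dist {n r : ℕ} (hr : 0 < r)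
(Zstar : Matrix (Fin n) (Fin r) ℝ)
    (sig : Fin r → ℝ) (hpos : ∀ s, 0 < sig s)
    (hmono : ∀ s t : Fin r, s ≤ t → sig t ≤ sig s)
    (hspec : ∃ V, IsOrthoMat V ∧ Zstarᵀ * Zstar = V * Matrix.diagonal sig * Vᵀ)
    (Z : Matrix (Fin n) (Fin r) ℝ) :
    frobNorm (Z * Zᵀ - Zstar * Zstarᵀ) ^ 2 ≥
      (2 * Real.sqrt 2 - 2) * (sig ⟨r - 1, Nat.sub_lt hr Nat.one_pos⟩) * (dSol Z Zstar) ^ 2 := by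
  obtain ⟨V, hV, hspec⟩ := hspec
  set σ := sig ⟨r - 1, Nat.sub_lt hr Nat.one_pos⟩
  have hσ : ∀ i, σ ≤ sig i := fun i => hmono _ _ (Fin.le_def.2 (Nat.le_sub_one_of_lt i.isLt))
  obtain ⟨U, hU, hP⟩ := exists_mem_orthogonalGroup_posSemidef_mul (Zᵀ * Zstar)
  have hX : (Zstarᵀ * Zstar - σ • 1).PosSemidef :=
    hspec ▸ posSemidef_mul_diagonal_mul_transpose_sub_smul_one hV.1 hσ
  have hB := hX.transpose_mul_self_mul_sub_smul_one hU
  have hZU : Zstar * U * (Zstar * U)ᵀ = Zstar * Zstarᵀ := by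
    rw [transpose_mul, Matrix.mul_assoc, ← Matrix.mul_assoc U, (mem_orthogonalGroup_iff _ ℝ).1 hU,
      Matrix.one_mul]
  have hmem : Zstar * U ∈ solSet Zstar := ⟨U, isOrthoMat_of_mem_orthogonalGroup hU, rfl⟩
  have hc : 0 ≤ (2 * √2 - 2) * σ := mul_nonneg (by linarith [Real.one_lt_sqrt_two]) (hpos _).le
  calc (2 * √2 - 2) * σ * dSol Z Zstar ^ 2
      ≤ (2 * √2 - 2) * σ * frobNorm (Z - Zstar * U) ^ 2 := by
        gcongr
        · exact dSol_nonneg Z Zstar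
        · exact dSol_le_frobNorm_sub hmem
    _ ≤ frobNorm (Z * Zᵀ - Zstar * Zstarᵀ) ^ 2 := by
        rw [← hZU]
        exact mul_frobNorm_sub_sq_le (by rwa [← Matrix.mul_assoc]) hB
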